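/- Let φ: B ⊂ ℝ^{n-1} → ℝ be real-analytic (or C^∞ with the property that at each point some partial derivative is nonzero), ξ = |φ|, and suppose φ(z_0) > 0 at a point z_0 of the connected open set B. Then φ is the unique continuous function on B with |φ| = ξ and φ(z_0) = ξ(z_0). Equivalently, if φ and φ̃ are two such functions with |φ| = |φ̃| on B that do not vanish to infinite order at any point, then φ = φ̃ or φ = -φ̃ on B. -/

import Mathlib

open Set

section Aux

variable {E : Type*} [NormedAddCommGroup E] [NormedSpace ℝ E]

end Aux

/-- **Theorem 2.2 (sign recovery from the modulus).**  Let `B ⊆ ℝ^d` be open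
and connected and let `φ, φ̃` be smooth functions on `B` which do not vanish to
infinite order at any point of `B` (at each point some partial derivative is
nonzero).  If `|φ| = |φ̃|` on `B` then `φ = φ̃` or `φ = -φ̃` on `B`. -/
theorem modulus_determines_up_to_sign
    {d : ℕ} (B : Set (Fin d → ℝ)) (hB : IsOpen B) (hBconn : IsConnected B)
    (φ φt : (Fin d → ℝ) → ℝ)
    (hφ : ContDiffOn ℝ (⊤ : ℕ∞) φ B) (hφt : ContDiffOn ℝ (⊤ : ℕ∞) φt B)
    (hnf : ∀ y ∈ B, ∃ k : ℕ, iteratedFDerivWithin ℝ k φ B y ≠ 0)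
    (hnft : ∀ y ∈ B, ∃ k : ℕ, iteratedFDerivWithin ℝ k φt B y ≠ 0)
    (habs : ∀ z ∈ B, |φ z| = |φt z|) :
    (∀ z ∈ B, φ z = φt z) ∨ (∀ z ∈ B, φ z = -φt z) := by
  classical
  set f : (Fin d → ℝ) → ℝ := fun x => φ x - φt x with hfdef
  set g : (Fin d → ℝ) → ℝ := fun x => φ x + φt x with hgdef
  have hmul : ∀ z ∈ B, f z * g z = 0 := by
    intro z hz
    have h2 : φ z ^ 2 = φt z ^ 2 := by
      rw [← sq_abs (φ z), habs z hz, sq_abs]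
    simp only [hfdef, hgdef]
    nlinarith [h2]
  -- the two open pieces
  set S : Set (Fin d → ℝ) := {z | ∀ᶠ x in nhds z, f x = 0} ∩ B with hSdef
  set T : Set (Fin d → ℝ) := {z | ∀ᶠ x in nhds z, g x = 0} ∩ B with hTdef
  have hSopen : IsOpen S := by
    refine IsOpen.inter ?_ hB
    rw [isOpen_iff_mem_nhds]
    intro z hz
    exact (hz.eventually_nhds).mono (fun x hx => hx)
  have hTopen : IsOpen T := by
    refine IsOpen.inter ?_ hB
    rw [isOpen_iff_mem_nhds]
    intro z hz
    exact (hz.eventually_nhds).mono (fun x hx => hx)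
  have hcover : B ⊆ S ∪ T := by
    have hL : (∀ x ∈ B, f x = 0) ∨ (∀ x ∈ B, g x = 0) := by
      have hfs : ContDiffOn ℝ (⊤ : ℕ∞) f B := hφ.sub hφt
      have hgs : ContDiffOn ℝ (⊤ : ℕ∞) g B := hφ.add hφt
      have hU : UniqueDiffOn ℝ B := hB.uniqueDiffOn
      set R : Set (Fin d → ℝ) := B ∩ f ⁻¹' {0}ᶜ with hRdef
      set R' : Set (Fin d → ℝ) := B ∩ g ⁻¹' {0}ᶜ with hR'def
      have hR : IsOpen R := hfs.continuousOn.isOpen_inter_preimage hB isOpen_compl_singleton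
      have hR' : IsOpen R' := hgs.continuousOn.isOpen_inter_preimage hB isOpen_compl_singleton
      have hflat : ∀ (h : (Fin d → ℝ) → ℝ) (Q Q' : Set (Fin d → ℝ)),
          ContDiffOn ℝ (⊤ : ℕ∞) h B → IsOpen Q' → Q ⊆ B → Q' ⊆ B →
          (∀ w ∈ B, w ∉ Q → h w = 0) → (∀ w ∈ Q', h w = 0) →
          ∀ (k : ℕ), ∀ y ∈ B, (y ∈ closure Q' ∨ y ∉ closure Q) →
            iteratedFDerivWithin ℝ k h B y = 0 := by
        intro h Q Q' hhs hQ' hQB hQ'B hout hin k y hyB hy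
        have hzero : ∀ x ∈ B, (∀ᶠ w in nhds x, w ∈ B → h w = 0) →
            iteratedFDerivWithin ℝ k h B x = 0 := by
          intro x hxB hxev
          have hev : h =ᶠ[nhdsWithin x B] (fun _ => (0:ℝ)) := by
            filter_upwards [self_mem_nhdsWithin, nhdsWithin_le_nhds hxev] with w hwB hw
            exact hw hwB
          rw [hev.iteratedFDerivWithin_eq (hev.self_of_nhdsWithin hxB) k]
          exact congrFun iteratedFDerivWithin_zero_fun x
        rcases hy with hy | hy
        · have hc : ContinuousWithinAt (iteratedFDerivWithin ℝ k h B) Q' y :=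
            ((hhs.continuousOn_iteratedFDerivWithin (by exact_mod_cast le_top) hU) y hyB).mono hQ'B
          have h1 := hc.mem_closure_image hy
          have hsub : (iteratedFDerivWithin ℝ k h B) '' Q' ⊆ {0} := by
            rintro _ ⟨x, hx, rfl⟩
            exact hzero x (hQ'B hx) (by
              filter_upwards [hQ'.mem_nhds hx] with w hw _
              exact hin w hw)
          have h2 := closure_mono hsub h1
          simpa using h2
        · apply hzero y hyB
          filter_upwards [isClosed_closure.isOpen_compl.mem_nhds hy] with w hw hwB
          exact hout w hwB (fun hwQ => hw (subset_closure hwQ))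
      have hfout : ∀ w ∈ B, w ∉ R → f w = 0 := by
        intro w hwB hw
        by_contra hne
        exact hw ⟨hwB, hne⟩
      have hgout : ∀ w ∈ B, w ∉ R' → g w = 0 := by
        intro w hwB hw
        by_contra hne
        exact hw ⟨hwB, hne⟩
      have hfin : ∀ w ∈ R', f w = 0 := by
        intro w hw
        have hgw : g w ≠ 0 := by simpa using hw.2
        exact (mul_eq_zero.mp (hmul w hw.1)).resolve_right hgw
      have hgin : ∀ w ∈ R, g w = 0 := by
        intro w hw
        have hfw : f w ≠ 0 := by simpa using hw.2
        exact (mul_eq_zero.mp (hmul w hw.1)).resolve_left hfw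
      have hkey : ∀ y ∈ B, (y ∈ closure R ↔ y ∈ closure R') → False := by
        intro y hyB hiff
        obtain ⟨k, hk⟩ := hnf y hyB
        apply hk
        have hF := hflat f R R' hfs hR' inter_subset_left inter_subset_left hfout hfin k y hyB
          (by tauto)
        have hG := hflat g R' R hgs hR inter_subset_left inter_subset_left hgout hgin k y hyB
          (by tauto)
        have hsum : iteratedFDerivWithin ℝ k (f + g) B y = 0 := by
          rw [iteratedFDerivWithin_add_apply
            ((hfs.of_le (by exact_mod_cast le_top)) y hyB)
            ((hgs.of_le (by exact_mod_cast le_top)) y hyB) hU hyB, hF, hG, add_zero]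
        have h2φ : f + g = (2:ℝ) • φ := by
          funext x
          simp only [hfdef, hgdef, Pi.add_apply, Pi.smul_apply, smul_eq_mul]
          ring
        rw [h2φ, iteratedFDerivWithin_const_smul_apply
          ((hφ.of_le (by exact_mod_cast le_top)) y hyB) hU hyB] at hsum
        exact (smul_eq_zero.mp hsum).resolve_left two_ne_zero
      have hpc := hBconn.isPreconnected (closure R')ᶜ (closure R)ᶜ
        isClosed_closure.isOpen_compl isClosed_closure.isOpen_compl
        (by
          intro y hyB
          by_contra hc
          simp only [mem_union, mem_compl_iff, not_or, not_not] at hc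
          exact hkey y hyB ⟨fun _ => hc.1, fun _ => hc.2⟩)
      by_cases hu : (B ∩ (closure R')ᶜ).Nonempty
      · by_cases hv : (B ∩ (closure R)ᶜ).Nonempty
        · obtain ⟨y, hyB, hy1, hy2⟩ := hpc hu hv
          exact (hkey y hyB ⟨fun h => absurd h hy2, fun h => absurd h hy1⟩).elim
        · right
          intro x hxB
          by_contra hne
          have hxR : x ∈ closure R := by
            by_contra hx
            exact hv ⟨x, hxB, hx⟩
          exact hkey x hxB ⟨fun _ => subset_closure ⟨hxB, hne⟩, fun _ => hxR⟩
      · left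
        intro x hxB
        by_contra hne
        have hxR : x ∈ closure R' := by
          by_contra hx
          exact hu ⟨x, hxB, hx⟩
        exact hkey x hxB ⟨fun _ => hxR, fun _ => subset_closure ⟨hxB, hne⟩⟩
    intro z hz
    rcases hL with h | h
    · exact Or.inl ⟨Filter.eventually_of_mem (hB.mem_nhds hz) h, hz⟩
    · exact Or.inr ⟨Filter.eventually_of_mem (hB.mem_nhds hz) h, hz⟩
  have hdisj : Disjoint S T := by
    rw [Set.disjoint_left]
    rintro z ⟨hzf, hzB⟩ ⟨hzg, _⟩
    have hφev : ∀ᶠ x in nhds z, φ x = 0 := by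
      filter_upwards [hzf, hzg] with x h1 h2
      simp only [hfdef, hgdef] at h1 h2
      linarith
    obtain ⟨k, hk⟩ := hnf z hzB
    apply hk
    have hev : φ =ᶠ[nhdsWithin z B] (fun _ => (0:ℝ)) :=
      (hφev.filter_mono nhdsWithin_le_nhds).mono (fun x hx => hx)
    have hzero : φ z = (fun _ => (0:ℝ)) z := hφev.self_of_nhds
    calc iteratedFDerivWithin ℝ k φ B z
        = iteratedFDerivWithin ℝ k (fun _ => (0:ℝ)) B z :=
          hev.iteratedFDerivWithin_eq hzero k
      _ = 0 := congrFun iteratedFDerivWithin_zero_fun z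
  rcases hBconn.isPreconnected.subset_or_subset hSopen hTopen hdisj hcover with h | h
  · left
    intro z hz
    have : f z = 0 := ((h hz).1).self_of_nhds
    simp only [hfdef] at this
    linarith
  · right
    intro z hz
    have : g z = 0 := ((h hz).1).self_of_nhds
    simp only [hgdef] at this
    linarith
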